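/- arXiv:2112.07532 — 5 statements merged into one kernel-verified Lean document; each statement's English description precedes it below -/
import Mathlib

section
/- Let η ∈ (0, 1/50), let X_1, …, X_m be independent Bernoulli random variables each equal to 1 with probability η, let α_1, …, α_m ∈ {0, 1}, and set Y = ∑_{i=1}^m α_i X_i. Then for every real number d ≥ ∑_{i=1}^m α_i, one has Pr[Y ≥ d/2] ≤ (3η)^{d/5}. -/
/-!
Off a null set every `X i` is `0` or `1`, so `Y` counts the indices `i ∈ S = {i | α i = 1}` with
`X i = 1`. If `Y ≥ d/2`, then all `X i` with `i` in some `⌈d/2⌉`-subset of `S` equal `1`, and a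
union bound over these subsets gives
`Pr[Y ≥ d/2] ≤ C(|S|, ⌈d/2⌉) η^⌈d/2⌉ ≤ 2^d η^(d/2) = (4η)^(d/2) ≤ (3η)^(d/5)`.
-/

open MeasureTheory ProbabilityTheory Finset
open scoped ENNReal

lemma Finset.sum_eq_card_filter_eq_one {ι R : Type*} [AddCommMonoidWithOne R] [DecidableEq R]
    {s : Finset ι} {f : ι → R} (hf : ∀ i ∈ s, f i = 0 ∨ f i = 1) :
    ∑ i ∈ s, f i = #{i ∈ s | f i = 1} := by
  rw [← sum_boole]
  refine sum_congr rfl fun i hi => ?_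
  rcases hf i hi with h | h <;> simp [h]

lemma Real.four_mul_rpow_half_le_three_mul_rpow_fifth {η d : ℝ} (hη0 : 0 ≤ η) (hη : η ≤ 1 / 5)
    (hd : 0 ≤ d) : (4 * η) ^ (d / 2) ≤ (3 * η) ^ (d / 5) := by
  have hpow : (4 * η) ^ 5 ≤ (3 * η) ^ 2 := by
    have : η ^ 3 ≤ (1 / 5) ^ 3 := pow_le_pow_left₀ hη0 hη 3
    nlinarith [pow_nonneg hη0 2]
  calc (4 * η) ^ (d / 2) = ((4 * η) ^ 5) ^ (d / 10) := by
        rw [← Real.rpow_natCast_mul (by positivity)]; ring_nf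
    _ ≤ ((3 * η) ^ 2) ^ (d / 10) := by gcongr
    _ = (3 * η) ^ (d / 5) := by
        rw [← Real.rpow_natCast_mul (by positivity)]; ring_nf

lemma Nat.choose_mul_pow_le_three_mul_rpow {η d : ℝ} {n k : ℕ} (hη0 : 0 < η) (hη : η ≤ 1 / 5)
    (hn : n ≤ d) (hk : d / 2 ≤ k) : n.choose k * η ^ k ≤ (3 * η) ^ (d / 5) := by
  have hd : 0 ≤ d := (Nat.cast_nonneg n).trans hn
  have hchoose : (n.choose k : ℝ) ≤ 4 ^ (d / 2) :=
    calc (n.choose k : ℝ) ≤ 2 ^ n := by exact_mod_cast n.choose_le_two_pow k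
      _ = 2 ^ (n : ℝ) := (Real.rpow_natCast 2 n).symm
      _ ≤ 2 ^ d := Real.rpow_le_rpow_of_exponent_le one_le_two hn
      _ = 4 ^ (d / 2) := by
        rw [show (4 : ℝ) = 2 ^ 2 by norm_num, ← Real.rpow_natCast_mul zero_le_two]; ring_nf
  have hpow : η ^ k ≤ η ^ (d / 2) := by
    rw [← Real.rpow_natCast]
    exact Real.rpow_le_rpow_of_exponent_ge hη0 (by linarith) hk
  calc n.choose k * η ^ k ≤ 4 ^ (d / 2) * η ^ (d / 2) := by gcongr
    _ = (4 * η) ^ (d / 2) := (Real.mul_rpow (by norm_num) hη0.le).symm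
    _ ≤ (3 * η) ^ (d / 5) := Real.four_mul_rpow_half_le_three_mul_rpow_fifth hη0.le hη hd

namespace ProbabilityTheory

variable {Ω ι : Type*} [MeasurableSpace Ω] {μ : Measure Ω}

lemma iIndepFun.iIndepSet_preimage {β : ι → Type*} [∀ i, MeasurableSpace (β i)]
    {f : ∀ i, Ω → β i} (hf : iIndepFun f μ) (hmeas : ∀ i, Measurable (f i))
    {s : ∀ i, Set (β i)} (hs : ∀ i, MeasurableSet (s i)) :
    iIndepSet (fun i => f i ⁻¹' s i) μ :=
  (iIndepSet_iff_meas_biInter fun i => hmeas i (hs i)).2 fun _ =>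
    hf.meas_biInter fun i _ => ⟨s i, hs i, rfl⟩

open Classical in
lemma iIndepSet.measure_le_card_filter_mem_le {A : ι → Set Ω} (hA : iIndepSet A μ)
    (S : Finset ι) (k : ℕ) {p : ℝ≥0∞} (hp : ∀ i ∈ S, μ (A i) ≤ p) :
    μ {ω | k ≤ #{i ∈ S | ω ∈ A i}} ≤ (#S).choose k * p ^ k := by
  have hcover : {ω | k ≤ #{i ∈ S | ω ∈ A i}} ⊆ ⋃ T ∈ S.powersetCard k, ⋂ i ∈ T, A i := by
    intro ω hω
    obtain ⟨T, hTS, hTk⟩ := exists_subset_card_eq hω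
    exact Set.mem_biUnion (mem_powersetCard.2 ⟨hTS.trans (filter_subset _ _), hTk⟩)
      (Set.mem_iInter₂.2 fun i hi => (mem_filter.1 (hTS hi)).2)
  calc μ {ω | k ≤ #{i ∈ S | ω ∈ A i}}
      ≤ ∑ T ∈ S.powersetCard k, μ (⋂ i ∈ T, A i) :=
        (measure_mono hcover).trans (measure_biUnion_finset_le _ _)
    _ ≤ ∑ _T ∈ S.powersetCard k, p ^ k := sum_le_sum fun T hT => by
        obtain ⟨hTS, hTk⟩ := mem_powersetCard.1 hT
        rw [hA.meas_biInter, ← hTk]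
        exact prod_le_pow_card _ _ _ fun i hi => hp i (hTS hi)
    _ = (#S).choose k * p ^ k := by rw [sum_const, card_powersetCard, nsmul_eq_mul]

lemma ae_eq_zero_or_eq_one_of_measure_eq [IsProbabilityMeasure μ] {X : Ω → ℝ}
    (hX : Measurable X) {p : ℝ} (hp0 : 0 ≤ p) (hp1 : p ≤ 1)
    (h1 : μ {ω | X ω = 1} = ENNReal.ofReal p) (h0 : μ {ω | X ω = 0} = ENNReal.ofReal (1 - p)) :
    ∀ᵐ ω ∂μ, X ω = 0 ∨ X ω = 1 := by
  have hdisj : Disjoint {ω | X ω = 0} {ω | X ω = 1} :=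
    Set.disjoint_left.2 fun ω h0 h1 => zero_ne_one (h0.symm.trans h1)
  have hm0 : MeasurableSet {ω | X ω = 0} := hX (measurableSet_singleton 0)
  have hm1 : MeasurableSet {ω | X ω = 1} := hX (measurableSet_singleton 1)
  rw [ae_iff_measure_eq (Set.ofPred_or ▸ hm0.union hm1).nullMeasurableSet, measure_univ,
    Set.ofPred_or, measure_union hdisj hm1, h0, h1,
    ← ENNReal.ofReal_add (sub_nonneg.2 hp1) hp0, sub_add_cancel, ENNReal.ofReal_one]

end ProbabilityTheory

/-- Let `η ∈ (0, 1/50)`, let `X 1, …, X m` be independent Bernoulli random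
variables with parameter `η` (each equals `1` with probability `η` and `0` with
probability `1 - η`), let `α i ∈ {0, 1}`, and set `Y = ∑ i, α i * X i`. Then for every
real `d ≥ ∑ i, α i`, one has `Pr[Y ≥ d/2] ≤ (3η)^(d/5)`. -/
theorem stmt_1 {Ω : Type*} [MeasurableSpace Ω] (μ : Measure Ω) [IsProbabilityMeasure μ]
    (m : ℕ) (η : ℝ) (hη : η ∈ Set.Ioo (0 : ℝ) (1 / 50))
    (X : Fin m → Ω → ℝ) (hXmeas : ∀ i, Measurable (X i))
    (hindep : ProbabilityTheory.iIndepFun X μ)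
    (hX1 : ∀ i, μ {ω | X i ω = 1} = ENNReal.ofReal η)
    (hX0 : ∀ i, μ {ω | X i ω = 0} = ENNReal.ofReal (1 - η))
    (α : Fin m → ℝ) (hα : ∀ i, α i = 0 ∨ α i = 1)
    (d : ℝ) (hd : ∑ i, α i ≤ d) :
    μ {ω | d / 2 ≤ ∑ i, α i * X i ω} ≤ ENNReal.ofReal ((3 * η) ^ (d / 5)) := by
  classical
  obtain ⟨hη0, hη⟩ := hη
  set S : Finset (Fin m) := {i | α i = 1}
  set k := ⌈d / 2⌉₊
  have hS : (#S : ℝ) ≤ d := by rwa [sum_eq_card_filter_eq_one fun i _ => hα i] at hd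
  have hbernoulli : ∀ᵐ ω ∂μ, ∀ i, X i ω = 0 ∨ X i ω = 1 := ae_all_iff.2 fun i =>
    ae_eq_zero_or_eq_one_of_measure_eq (hXmeas i) hη0.le (by linarith) (hX1 i) (hX0 i)
  have hcount : ∀ᵐ ω ∂μ, ∑ i, α i * X i ω = #{i ∈ S | ω ∈ X i ⁻¹' {1}} := by
    filter_upwards [hbernoulli] with ω hω
    have hrestrict : ∑ i, α i * X i ω = ∑ i ∈ S, X i ω := by
      rw [sum_filter]
      exact sum_congr rfl fun i _ => by rcases hα i with h | h <;> simp [h]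
    rw [hrestrict, sum_eq_card_filter_eq_one fun i _ => hω i]
    rfl
  have hA : iIndepSet (fun i => X i ⁻¹' {1}) μ :=
    hindep.iIndepSet_preimage hXmeas fun _ => measurableSet_singleton 1
  calc μ {ω | d / 2 ≤ ∑ i, α i * X i ω}
      ≤ μ {ω | k ≤ #{i ∈ S | ω ∈ X i ⁻¹' {1}}} := measure_mono_ae <| by
        filter_upwards [hcount] with ω hω hle
        exact Nat.ceil_le.2 (hω ▸ hle)
    _ ≤ (#S).choose k * ENNReal.ofReal η ^ k :=
        hA.measure_le_card_filter_mem_le S k fun i _ => (hX1 i).le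
    _ = ENNReal.ofReal ((#S).choose k * η ^ k) := by
        rw [ENNReal.ofReal_mul (by positivity), ENNReal.ofReal_natCast, ENNReal.ofReal_pow hη0.le]
    _ ≤ ENNReal.ofReal ((3 * η) ^ (d / 5)) := ENNReal.ofReal_le_ofReal <|
        Nat.choose_mul_pow_le_three_mul_rpow hη0 (by linarith) hS (Nat.le_ceil _)
end

section
/- Let k ≥ 1 be an integer and let E_1, …, E_k, Z_1, …, Z_k be arbitrarily correlated random variables. Let η̃ ∈ (0, e^{−5k}) and let q_1, …, q_k be positive integers such that, for all i ∈ [k], E_i ∈ {0, 1} with E[E_i] ≤ η̃^{q_i/5}, and Z_i ∈ [0, 1] with E[Z_i] ≤ η̃. Then E[∏_{i=1}^k (1 + Z_i + q_i·E_i)] ≤ 1 + 3^k·η̃^{1/5}. -/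
open MeasureTheory Finset

private lemma aux_pow_bound (k qm : ℕ) (hq : 1 ≤ qm) (η : ℝ) (hη0 : 0 < η)
    (hηe : η ≤ Real.exp (-(5 * (k:ℝ)))) :
    (qm:ℝ)^k * η ^ ((qm:ℝ)/5) ≤ η ^ ((1:ℝ)/5) := by
  have h1 : η ^ ((qm:ℝ)/5) = η ^ ((1:ℝ)/5) * η ^ (((qm:ℝ)-1)/5) := by
    rw [← Real.rpow_add hη0]; ring_nf
  have hqm1 : (0:ℝ) ≤ ((qm:ℝ)-1)/5 := by
    have : (1:ℝ) ≤ (qm:ℝ) := by exact_mod_cast hq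
    linarith
  have h2 : η ^ (((qm:ℝ)-1)/5) ≤ (Real.exp (-(5*(k:ℝ)))) ^ (((qm:ℝ)-1)/5) :=
    Real.rpow_le_rpow hη0.le hηe hqm1
  have h3 : (Real.exp (-(5*(k:ℝ)))) ^ (((qm:ℝ)-1)/5) = Real.exp (-((k:ℝ)*((qm:ℝ)-1))) := by
    rw [← Real.exp_mul]; ring_nf
  have h4 : (qm:ℝ) ≤ Real.exp ((qm:ℝ)-1) := by
    have := Real.add_one_le_exp ((qm:ℝ)-1)
    linarith
  have h5 : (qm:ℝ)^k * Real.exp (-((k:ℝ)*((qm:ℝ)-1))) ≤ 1 := by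
    have heq : (qm:ℝ)^k * Real.exp (-((k:ℝ)*((qm:ℝ)-1)))
        = ((qm:ℝ) * Real.exp (-((qm:ℝ)-1)))^k := by
      rw [mul_pow, ← Real.exp_nat_mul]; ring_nf
    rw [heq]
    have hb : (qm:ℝ) * Real.exp (-((qm:ℝ)-1)) ≤ 1 := by
      rw [Real.exp_neg, ← div_eq_mul_inv, div_le_one (Real.exp_pos _)]
      exact h4
    calc ((qm:ℝ) * Real.exp (-((qm:ℝ)-1)))^k ≤ 1^k := by
          apply pow_le_pow_left₀ (by positivity) hb
      _ = 1 := one_pow k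
  calc (qm:ℝ)^k * η ^ ((qm:ℝ)/5)
      = η ^ ((1:ℝ)/5) * ((qm:ℝ)^k * η ^ (((qm:ℝ)-1)/5)) := by rw [h1]; ring
    _ ≤ η ^ ((1:ℝ)/5) * ((qm:ℝ)^k * Real.exp (-((k:ℝ)*((qm:ℝ)-1)))) := by
        apply mul_le_mul_of_nonneg_left _ (Real.rpow_nonneg hη0.le _)
        apply mul_le_mul_of_nonneg_left _ (by positivity)
        rw [← h3]; exact h2
    _ ≤ η ^ ((1:ℝ)/5) * 1 := by
        apply mul_le_mul_of_nonneg_left h5 (Real.rpow_nonneg hη0.le _)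
    _ = η ^ ((1:ℝ)/5) := mul_one _


/-- Let `k ≥ 1` and let `E 1, …, E k, Z 1, …, Z k` be arbitrarily correlated
random variables on a common probability space. Let `η̃ ∈ (0, e^{-5k})` and let
`q 1, …, q k` be positive integers such that for all `i`: `E i ∈ {0,1}` with
`𝔼[E i] ≤ η̃^(q i / 5)`, and `Z i ∈ [0,1]` with `𝔼[Z i] ≤ η̃`. Then
`𝔼[∏ i, (1 + Z i + q i * E i)] ≤ 1 + 3^k * η̃^(1/5)`. -/
theorem stmt_2 {Ω : Type*} [MeasurableSpace Ω] (μ : Measure Ω) [IsProbabilityMeasure μ]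
    (k : ℕ) (hk : 1 ≤ k)
    (E Z : Fin k → Ω → ℝ) (hEmeas : ∀ i, Measurable (E i)) (hZmeas : ∀ i, Measurable (Z i))
    (η : ℝ) (hη : η ∈ Set.Ioo (0 : ℝ) (Real.exp (-(5 * (k : ℝ)))))
    (q : Fin k → ℕ) (hq : ∀ i, 1 ≤ q i)
    (hE01 : ∀ i, ∀ ω, E i ω = 0 ∨ E i ω = 1)
    (hEexp : ∀ i, ∫ ω, E i ω ∂μ ≤ η ^ ((q i : ℝ) / 5))
    (hZ01 : ∀ i, ∀ ω, Z i ω ∈ Set.Icc (0 : ℝ) 1)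
    (hZexp : ∀ i, ∫ ω, Z i ω ∂μ ≤ η) :
    ∫ ω, ∏ i, (1 + Z i ω + (q i : ℝ) * E i ω) ∂μ ≤ 1 + 3 ^ k * η ^ ((1 : ℝ) / 5) := by
  obtain ⟨hη0, hηe⟩ := hη
  set c : ℝ := η ^ ((1:ℝ)/5) with hc
  have hc0 : 0 < c := Real.rpow_pos_of_pos hη0 _
  have hE0 : ∀ i ω, 0 ≤ E i ω := by
    intro i ω; rcases hE01 i ω with h|h <;> simp [h]
  have hE1 : ∀ i ω, E i ω ≤ 1 := by
    intro i ω; rcases hE01 i ω with h|h <;> simp [h]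
  have hZ0 : ∀ i ω, 0 ≤ Z i ω := fun i ω => (hZ01 i ω).1
  have hZ1 : ∀ i ω, Z i ω ≤ 1 := fun i ω => (hZ01 i ω).2
  have hη1 : η < 1 := lt_of_lt_of_le hηe (by
    rw [Real.exp_le_one_iff]
    have : (0:ℝ) ≤ 5 * (k:ℝ) := by positivity
    linarith)
  -- the monomial functions
  set g : Finset (Fin k) → Finset (Fin k) → Ω → ℝ :=
    fun t u ω => (∏ i ∈ u, (q i : ℝ) * E i ω) * (∏ i ∈ t \ u, Z i ω) with hgdef
  have hgmeas : ∀ t u, Measurable (g t u) := by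
    intro t u
    apply Measurable.mul
    · exact Finset.measurable_prod _ (fun i _ => (hEmeas i).const_mul _)
    · exact Finset.measurable_prod _ (fun i _ => hZmeas i)
  have hgnn : ∀ t u ω, 0 ≤ g t u ω := by
    intro t u ω
    apply mul_nonneg
    · exact Finset.prod_nonneg fun i _ => mul_nonneg (by positivity) (hE0 i ω)
    · exact Finset.prod_nonneg fun i _ => hZ0 i ω
  have hgle : ∀ t u ω, g t u ω ≤ ∏ i ∈ u, (q i : ℝ) := by
    intro t u ω
    have h1 : (∏ i ∈ u, (q i : ℝ) * E i ω) ≤ ∏ i ∈ u, (q i : ℝ) := by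
      apply Finset.prod_le_prod
      · exact fun i _ => mul_nonneg (by positivity) (hE0 i ω)
      · intro i _
        calc (q i : ℝ) * E i ω ≤ (q i : ℝ) * 1 :=
              mul_le_mul_of_nonneg_left (hE1 i ω) (by positivity)
          _ = (q i : ℝ) := mul_one _
    have h2 : (∏ i ∈ t \ u, Z i ω) ≤ 1 :=
      Finset.prod_le_one (fun i _ => hZ0 i ω) (fun i _ => hZ1 i ω)
    calc g t u ω ≤ (∏ i ∈ u, (q i : ℝ) * E i ω) * 1 := by
          apply mul_le_mul_of_nonneg_left h2
          exact Finset.prod_nonneg fun i _ => mul_nonneg (by positivity) (hE0 i ω)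
      _ = ∏ i ∈ u, (q i : ℝ) * E i ω := mul_one _
      _ ≤ ∏ i ∈ u, (q i : ℝ) := h1
  have hgint : ∀ t u, Integrable (g t u) μ := by
    intro t u
    apply (integrable_const (∏ i ∈ u, (q i : ℝ))).mono'
      (hgmeas t u).aestronglyMeasurable
    filter_upwards with ω
    rw [Real.norm_eq_abs, abs_of_nonneg (hgnn t u ω)]
    exact hgle t u ω
  have hEint : ∀ i, Integrable (E i) μ := by
    intro i
    apply (integrable_const (1:ℝ)).mono' (hEmeas i).aestronglyMeasurable
    filter_upwards with ω
    rw [Real.norm_eq_abs, abs_of_nonneg (hE0 i ω)]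
    exact hE1 i ω
  have hZint : ∀ i, Integrable (Z i) μ := by
    intro i
    apply (integrable_const (1:ℝ)).mono' (hZmeas i).aestronglyMeasurable
    filter_upwards with ω
    rw [Real.norm_eq_abs, abs_of_nonneg (hZ0 i ω)]
    exact hZ1 i ω
  -- pointwise expansion
  have hpt : ∀ ω, ∏ i, (1 + Z i ω + (q i : ℝ) * E i ω)
      = ∑ t ∈ (univ : Finset (Fin k)).powerset, ∑ u ∈ t.powerset, g t u ω := by
    intro ω
    have h1 : ∀ i : Fin k, 1 + Z i ω + (q i : ℝ) * E i ω
        = ((fun j => (q j : ℝ) * E j ω + Z j ω) i + (fun _ => (1:ℝ)) i) := by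
      intro i; simp; ring
    calc ∏ i, (1 + Z i ω + (q i : ℝ) * E i ω)
        = ∏ i, ((fun j => (q j : ℝ) * E j ω + Z j ω) i + (fun _ => (1:ℝ)) i) :=
          Finset.prod_congr rfl (fun i _ => h1 i)
      _ = ∑ t ∈ (univ : Finset (Fin k)).powerset,
            (∏ i ∈ t, ((q i : ℝ) * E i ω + Z i ω)) * ∏ i ∈ univ \ t, (1:ℝ) :=
          Finset.prod_add _ _ _
      _ = ∑ t ∈ (univ : Finset (Fin k)).powerset,
            ∏ i ∈ t, ((q i : ℝ) * E i ω + Z i ω) := by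
          simp
      _ = ∑ t ∈ (univ : Finset (Fin k)).powerset, ∑ u ∈ t.powerset, g t u ω := by
          refine Finset.sum_congr rfl fun t _ => ?_
          exact Finset.prod_add _ _ _
  -- integral bound on each monomial with t nonempty
  have hI : ∀ t : Finset (Fin k), ∀ u ∈ t.powerset, t ≠ ∅ → ∫ ω, g t u ω ∂μ ≤ c := by
    intro t u hu ht
    rcases eq_or_ne u ∅ with hu0 | hu0
    · -- g t ∅ = ∏_{t} Z ≤ Z j
      obtain ⟨j, hj⟩ := Finset.nonempty_iff_ne_empty.mpr ht
      have hle : ∀ ω, g t u ω ≤ Z j ω := by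
        intro ω
        have : g t u ω = ∏ i ∈ t, Z i ω := by
          rw [hgdef]; simp [hu0]
        rw [this, ← Finset.prod_erase_mul t _ hj]
        calc (∏ i ∈ t.erase j, Z i ω) * Z j ω ≤ 1 * Z j ω := by
              apply mul_le_mul_of_nonneg_right _ (hZ0 j ω)
              exact Finset.prod_le_one (fun i _ => hZ0 i ω) (fun i _ => hZ1 i ω)
          _ = Z j ω := one_mul _
      calc ∫ ω, g t u ω ∂μ ≤ ∫ ω, Z j ω ∂μ :=
            integral_mono (hgint t u) (hZint j) hle
        _ ≤ η := hZexp j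
        _ ≤ c := by
            rw [hc]
            nth_rewrite 1 [← Real.rpow_one η]
            exact Real.rpow_le_rpow_of_exponent_ge hη0 hη1.le (by norm_num)
    · -- u nonempty: pick m with maximal q
      obtain ⟨m, hm, hmax⟩ := Finset.exists_max_image u q (Finset.nonempty_iff_ne_empty.mpr hu0)
      have hle : ∀ ω, g t u ω ≤ (q m : ℝ)^k * E m ω := by
        intro ω
        have h1 : g t u ω ≤ ∏ i ∈ u, ((q i : ℝ) * E i ω) := by
          rw [hgdef]
          calc (∏ i ∈ u, (q i : ℝ) * E i ω) * (∏ i ∈ t \ u, Z i ω)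
              ≤ (∏ i ∈ u, (q i : ℝ) * E i ω) * 1 := by
                apply mul_le_mul_of_nonneg_left
                  (Finset.prod_le_one (fun i _ => hZ0 i ω) (fun i _ => hZ1 i ω))
                exact Finset.prod_nonneg fun i _ => mul_nonneg (by positivity) (hE0 i ω)
            _ = ∏ i ∈ u, (q i : ℝ) * E i ω := mul_one _
        have h2 : ∏ i ∈ u, ((q i : ℝ) * E i ω) = (∏ i ∈ u, (q i : ℝ)) * ∏ i ∈ u, E i ω :=
          Finset.prod_mul_distrib
        have h3 : (∏ i ∈ u, (q i : ℝ)) ≤ (q m : ℝ)^k := by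
          calc (∏ i ∈ u, (q i : ℝ)) ≤ ∏ _i ∈ u, (q m : ℝ) := by
                apply Finset.prod_le_prod (fun i _ => by positivity)
                intro i hi; exact_mod_cast hmax i hi
            _ = (q m : ℝ) ^ u.card := Finset.prod_const _
            _ ≤ (q m : ℝ)^k := by
                apply pow_le_pow_right₀
                · exact_mod_cast hq m
                · calc u.card ≤ t.card := Finset.card_le_card (Finset.mem_powerset.mp hu)
                    _ ≤ (univ : Finset (Fin k)).card := Finset.card_le_univ t
                    _ = k := by simp
        have h4 : ∏ i ∈ u, E i ω ≤ E m ω := by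
          rw [← Finset.prod_erase_mul u _ hm]
          calc (∏ i ∈ u.erase m, E i ω) * E m ω ≤ 1 * E m ω := by
                apply mul_le_mul_of_nonneg_right _ (hE0 m ω)
                exact Finset.prod_le_one (fun i _ => hE0 i ω) (fun i _ => hE1 i ω)
            _ = E m ω := one_mul _
        calc g t u ω ≤ (∏ i ∈ u, (q i : ℝ)) * ∏ i ∈ u, E i ω := by rw [← h2]; exact h1
          _ ≤ (∏ i ∈ u, (q i : ℝ)) * E m ω := by
              apply mul_le_mul_of_nonneg_left h4
              exact Finset.prod_nonneg (fun i _ => by positivity)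
          _ ≤ (q m : ℝ)^k * E m ω := mul_le_mul_of_nonneg_right h3 (hE0 m ω)
      calc ∫ ω, g t u ω ∂μ ≤ ∫ ω, (q m : ℝ)^k * E m ω ∂μ :=
            integral_mono (hgint t u) ((hEint m).const_mul _) hle
        _ = (q m : ℝ)^k * ∫ ω, E m ω ∂μ := integral_const_mul _ _
        _ ≤ (q m : ℝ)^k * η ^ ((q m : ℝ)/5) := by
            apply mul_le_mul_of_nonneg_left (hEexp m) (by positivity)
        _ ≤ c := aux_pow_bound k (q m) (hq m) η hη0 hηe.le
  -- count: ∑_{t ⊆ univ} 2^{|t|} = 3^k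
  have hcount : ∑ t ∈ (univ : Finset (Fin k)).powerset, (2:ℝ)^t.card = 3^k := by
    have := Finset.prod_add (fun _ : Fin k => (2:ℝ)) (fun _ => (1:ℝ)) univ
    simp only [Finset.prod_const, Finset.prod_const_one, one_pow, mul_one] at this
    rw [← this]
    norm_num
  -- main computation
  rw [show (∫ ω, ∏ i, (1 + Z i ω + (q i : ℝ) * E i ω) ∂μ)
      = ∫ ω, ∑ t ∈ (univ : Finset (Fin k)).powerset, ∑ u ∈ t.powerset, g t u ω ∂μ from
    integral_congr_ae (Filter.Eventually.of_forall hpt)]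
  rw [integral_finset_sum _ (fun t _ => integrable_finset_sum _ (fun u _ => hgint t u))]
  have hsplit : ∑ t ∈ (univ : Finset (Fin k)).powerset,
      (∫ ω, ∑ u ∈ t.powerset, g t u ω ∂μ)
      = (∫ ω, ∑ u ∈ (∅ : Finset (Fin k)).powerset, g ∅ u ω ∂μ)
        + ∑ t ∈ ((univ : Finset (Fin k)).powerset).erase ∅,
            (∫ ω, ∑ u ∈ t.powerset, g t u ω ∂μ) := by
    rw [← Finset.add_sum_erase _ _ (Finset.empty_mem_powerset _)]
  rw [hsplit]
  have hfirst : (∫ ω, ∑ u ∈ (∅ : Finset (Fin k)).powerset, g ∅ u ω ∂μ) = 1 := by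
    have : ∀ ω, ∑ u ∈ (∅ : Finset (Fin k)).powerset, g ∅ u ω = 1 := by
      intro ω; rw [hgdef]; simp
    rw [integral_congr_ae (Filter.Eventually.of_forall this)]
    simp
  rw [hfirst]
  have hrest : ∑ t ∈ ((univ : Finset (Fin k)).powerset).erase ∅,
      (∫ ω, ∑ u ∈ t.powerset, g t u ω ∂μ) ≤ 3^k * c := by
    have step1 : ∀ t ∈ ((univ : Finset (Fin k)).powerset).erase ∅,
        (∫ ω, ∑ u ∈ t.powerset, g t u ω ∂μ) ≤ (2:ℝ)^t.card * c := by
      intro t ht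
      have ht0 : t ≠ ∅ := (Finset.mem_erase.mp ht).1
      rw [integral_finset_sum _ (fun u _ => hgint t u)]
      calc ∑ u ∈ t.powerset, ∫ ω, g t u ω ∂μ ≤ ∑ _u ∈ t.powerset, c :=
            Finset.sum_le_sum (fun u hu => hI t u hu ht0)
        _ = (t.powerset.card : ℝ) * c := by rw [Finset.sum_const]; simp [nsmul_eq_mul]
        _ = (2:ℝ)^t.card * c := by rw [Finset.card_powerset]; push_cast; ring
    calc ∑ t ∈ ((univ : Finset (Fin k)).powerset).erase ∅,
          (∫ ω, ∑ u ∈ t.powerset, g t u ω ∂μ)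
        ≤ ∑ t ∈ ((univ : Finset (Fin k)).powerset).erase ∅, (2:ℝ)^t.card * c :=
          Finset.sum_le_sum step1
      _ = (∑ t ∈ ((univ : Finset (Fin k)).powerset).erase ∅, (2:ℝ)^t.card) * c :=
          (Finset.sum_mul _ _ _).symm
      _ ≤ 3^k * c := by
          apply mul_le_mul_of_nonneg_right _ hc0.le
          have : ∑ t ∈ ((univ : Finset (Fin k)).powerset).erase ∅, (2:ℝ)^t.card
              = (∑ t ∈ (univ : Finset (Fin k)).powerset, (2:ℝ)^t.card) - (2:ℝ)^(∅:Finset (Fin k)).card := by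
            rw [Finset.sum_erase_eq_sub (Finset.empty_mem_powerset _)]
          rw [this, hcount]
          simp
  linarith
end

section
/- The function v ↦ v·h(1/v) is monotone decreasing on (0, ∞), where h(u) = (1+u)·ln(1+u) − u. That is, for all real numbers 0 < v ≤ v', one has v'·h(1/v') ≤ v·h(1/v). -/
/-!
`h` is convex on `[0, ∞)` with `h 0 = 0`, so its secant slope `h u / u` from the origin increases
with `u`. Substituting `u = 1 / v` turns this slope into `v * h (1 / v)`, which therefore decreases
with `v`.
-/

open Real Set

theorem ConvexOn.monotoneOn_div_self_of_map_zero {f : ℝ → ℝ} (hf : ConvexOn ℝ (Ici 0) f)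
    (h0 : f 0 = 0) : MonotoneOn (fun x => f x / x) (Ioi 0) := by
  intro x hx y hy hxy
  simpa [h0] using hf.secant_mono self_mem_Ici (mem_Ici_of_Ioi hx) (mem_Ici_of_Ioi hy)
    (ne_of_gt hx) (ne_of_gt hy) hxy

theorem ConvexOn.antitoneOn_mul_comp_one_div {f : ℝ → ℝ} (hf : ConvexOn ℝ (Ici 0) f)
    (h0 : f 0 = 0) : AntitoneOn (fun v => v * f (1 / v)) (Ioi 0) := by
  intro v hv v' hv' hvv'
  have hslope := hf.monotoneOn_div_self_of_map_zero h0 (mem_Ioi.2 (one_div_pos.2 hv'))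
    (mem_Ioi.2 (one_div_pos.2 hv)) (one_div_le_one_div_of_le hv hvv')
  simpa only [one_div, div_inv_eq_mul, mul_comm] using hslope

theorem convexOn_one_add_mul_log_one_add_sub_self :
    ConvexOn ℝ (Ici 0) fun u : ℝ => (1 + u) * log (1 + u) - u := by
  have hshift : ConvexOn ℝ (Ici 0) fun u : ℝ => (1 + u) * log (1 + u) :=
    (convexOn_mul_log.translate_right 1).subset
      (fun u (hu : 0 ≤ u) => show 0 ≤ 1 + u by linarith) (convex_Ici 0)
  exact hshift.sub (concaveOn_id (convex_Ici 0))

/-- The function `v ↦ v * h (1/v)` is monotone decreasing on `(0, ∞)`,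
where `h u = (1+u) * ln (1+u) - u`: for all `0 < v ≤ v'`,
`v' * h (1/v') ≤ v * h (1/v)`. -/
theorem stmt_3 (h : ℝ → ℝ) (hdef : ∀ u : ℝ, 0 < u → h u = (1 + u) * Real.log (1 + u) - u)
    (v v' : ℝ) (hv : 0 < v) (hvv' : v ≤ v') :
    v' * h (1 / v') ≤ v * h (1 / v) := by
  have hv' : 0 < v' := hv.trans_le hvv'
  rw [hdef _ (one_div_pos.2 hv), hdef _ (one_div_pos.2 hv')]
  exact convexOn_one_add_mul_log_one_add_sub_self.antitoneOn_mul_comp_one_div (by simp) hv hv' hvv'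
end

section
/- For every real number u ≥ 0, one has h(u) = (1+u)·ln(1+u) − u ≥ (1/2)·u·ln u (with the convention that 0·ln 0 = 0 at u = 0). -/
/-! Setting `g u = (1 + u) * log (1 + u) - u - u * log u / 2`, we have `g 0 = 0` and
`g' u = log (1 + u) - (1 + log u) / 2 ≥ 0` on `(0, ∞)`, because `(1 + u) ^ 2 ≥ 4 u ≥ e u`.
Hence `g` is monotone on `[0, ∞)` and nonnegative there. -/

open Real Set

lemma one_add_log_le_two_mul_log_one_add {x : ℝ} (hx : 0 < x) :
    1 + log x ≤ 2 * log (1 + x) := by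
  have hex : exp 1 * x ≤ (1 + x) ^ 2 := by
    nlinarith [exp_one_lt_d9, sq_nonneg (1 - x)]
  have := log_le_log (by positivity) hex
  rwa [log_mul (exp_pos 1).ne' hx.ne', log_exp, log_pow, Nat.cast_ofNat] at this

lemma hasDerivAt_one_add_mul_log_one_add_sub_half_mul_log {x : ℝ} (hx : 0 < x) :
    HasDerivAt (fun u ↦ (1 + u) * log (1 + u) - u - 1 / 2 * (u * log u))
      (log (1 + x) - (1 + log x) / 2) x := by
  have hshift := (hasDerivAt_mul_log (by linarith : (1 + x) ≠ 0)).comp_const_add 1 x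
  exact ((hshift.sub (hasDerivAt_id x)).sub
    ((hasDerivAt_mul_log hx.ne').const_mul (1 / 2))).congr_deriv (by ring)

lemma monotoneOn_one_add_mul_log_one_add_sub_half_mul_log :
    MonotoneOn (fun u ↦ (1 + u) * log (1 + u) - u - 1 / 2 * (u * log u)) (Ici 0) := by
  have hcont : Continuous fun u : ℝ ↦ (1 + u) * log (1 + u) - u - 1 / 2 * (u * log u) :=
    ((continuous_mul_log.comp (continuous_const.add continuous_id)).sub continuous_id).sub
      (continuous_const.mul continuous_mul_log)
  refine monotoneOn_of_hasDerivWithinAt_nonneg (convex_Ici 0) hcont.continuousOn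
    (f' := fun x ↦ log (1 + x) - (1 + log x) / 2) (fun x hx ↦ ?_) (fun x hx ↦ ?_)
  all_goals rw [interior_Ici] at hx
  · exact (hasDerivAt_one_add_mul_log_one_add_sub_half_mul_log hx).hasDerivWithinAt
  · linarith [one_add_log_le_two_mul_log_one_add hx]

/-- For every real `u ≥ 0`, one has
`h u = (1+u) * ln (1+u) - u ≥ (1/2) * u * ln u`
(with the convention `0 * ln 0 = 0` at `u = 0`; note `Real.log 0 = 0` in Mathlib). -/
theorem stmt_4 (u : ℝ) (hu : 0 ≤ u) :
    (1 / 2) * u * Real.log u ≤ (1 + u) * Real.log (1 + u) - u := by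
  have hgap := monotoneOn_one_add_mul_log_one_add_sub_half_mul_log self_mem_Ici hu hu
  simp only [add_zero, log_one, mul_zero, sub_zero, zero_mul] at hgap
  linarith
end

section
/- Let n ≥ 1, let S be a finite nonempty set, let f : {0,1}^n → S and g : S × [n] → {0,1} be functions, and let ε ∈ (0, 1/2]. Suppose that for x chosen uniformly at random from {0,1}^n and i chosen uniformly at random from [n], independently, Pr[g(f(x), i) = x_i] ≥ 1/2 + ε. Then log₂ |S| ≥ n·(1 − h(1/2 + ε)), where h(p) = −p·log₂ p − (1−p)·log₂(1−p) is the binary entropy function (with the convention 0·log₂ 0 = 0). -/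
/-!
Give each input `x` the weight `p ^ c(x) * (1 - p) ^ (n - c(x))`, where `c(x)` is the number of
indices Bob answers correctly from `f x`. Once the message `s` is fixed, Bob's answers form a fixed
guess `y`, and `∑ x, ∏ i, (if y i = x i then p else 1 - p) = (p + (1 - p)) ^ n = 1`; so the total
weight is at most `|S|`. By Jensen's inequality for `exp`, the total weight is at least `2 ^ n`
times the exponential of the average log-weight, which is at least `-n * binEntropy p` because the
average of `c` is at least `p n` and `log (1 - p) ≤ log p`. For `p = 1` the log-weights
degenerate, but then every answer is correct and `f` is injective.
-/

open Finset Real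

theorem sum_prod_ite_eq_add_pow {ι R : Type*} [Fintype ι] [DecidableEq ι] [CommSemiring R]
    (y : ι → Bool) (p q : R) :
    ∑ x : ι → Bool, ∏ i, (if y i = x i then p else q) = (p + q) ^ Fintype.card ι := by
  have hfactor (i : ι) : ∑ b : Bool, (if y i = b then p else q) = p + q := by
    cases y i <;> simp [add_comm]
  simp only [← Fintype.prod_sum fun i b => if y i = b then p else q, hfactor, prod_const, card_univ]

theorem card_mul_exp_sum_div_card_le_sum_exp {α : Type*} [Fintype α] [Nonempty α] (t : α → ℝ) :
    Fintype.card α * exp ((∑ a, t a) / Fintype.card α) ≤ ∑ a, exp (t a) := by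
  have hcard : (0 : ℝ) < Fintype.card α := by exact_mod_cast Fintype.card_pos
  have hjensen := convexOn_exp.map_sum_le (t := univ) (w := fun _ => (Fintype.card α : ℝ)⁻¹)
    (p := t) (fun _ _ => by positivity) (by simp [hcard.ne']) (fun _ _ => Set.mem_univ _)
  simp only [smul_eq_mul, ← mul_sum] at hjensen
  rw [div_eq_inv_mul]
  calc _ ≤ (Fintype.card α : ℝ) * ((Fintype.card α : ℝ)⁻¹ * ∑ a, exp (t a)) := by gcongr
    _ = _ := by field_simp

namespace Indexing

variable {ι S : Type*} [Fintype ι] [DecidableEq ι]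
  (f : (ι → Bool) → S) (g : S × ι → Bool)

def successes : Finset ((ι → Bool) × ι) := {xi | g (f xi.1, xi.2) = xi.1 xi.2}

theorem sum_prod_ite_le_card_mul_add_pow [Fintype S] {p q : ℝ} (hp : 0 ≤ p) (hq : 0 ≤ q) :
    ∑ x, ∏ i, (if g (f x, i) = x i then p else q) ≤ Fintype.card S * (p + q) ^ Fintype.card ι := by
  classical
  have hfiber (s : S) : ∑ x ∈ {x | f x = s}, ∏ i, (if g (f x, i) = x i then p else q)
      ≤ (p + q) ^ Fintype.card ι := by
    rw [← sum_prod_ite_eq_add_pow (fun i => g (s, i))]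
    calc _ = ∑ x ∈ {x | f x = s}, ∏ i, (if g (s, i) = x i then p else q) :=
          sum_congr rfl fun x hx => by rw [(mem_filter.mp hx).2]
      _ ≤ _ := sum_le_sum_of_subset_of_nonneg (subset_univ _) fun x _ _ =>
          prod_nonneg fun i _ => by split_ifs <;> assumption
  calc _ = ∑ s, ∑ x ∈ {x | f x = s}, ∏ i, (if g (f x, i) = x i then p else q) :=
        (sum_fiberwise univ f _).symm
    _ ≤ ∑ _s : S, (p + q) ^ Fintype.card ι := sum_le_sum fun s _ => hfiber s
    _ = _ := by simp

theorem sum_sum_ite_eq_card_successes (a b : ℝ) :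
    ∑ x, ∑ i, (if g (f x, i) = x i then a else b) =
      #(successes f g) * a + (Fintype.card ((ι → Bool) × ι) - #(successes f g)) * b := by
  rw [← Fintype.sum_prod_type' (fun x i => if g (f x, i) = x i then a else b), sum_ite,
    sum_const, sum_const, ← card_univ, ← card_filter_add_card_filter_not (s := univ)
      (fun xi : (ι → Bool) × ι => g (f xi.1, xi.2) = xi.1 xi.2)]
  simp [successes]

theorem injective_of_successes_eq_univ (h : successes f g = univ) : Function.Injective f := by
  have hdecode (x : ι → Bool) : (fun i => g (f x, i)) = x := by
    funext i
    have hx : (x, i) ∈ successes f g := h ▸ mem_univ _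
    exact (mem_filter.mp hx).2
  intro x y hxy
  rw [← hdecode x, ← hdecode y, hxy]

theorem card_mul_log_two_sub_binEntropy_le_log_card [Fintype S] {p : ℝ} (hp : 1 / 2 ≤ p)
    (hp1 : p ≤ 1) (hsucc : p * Fintype.card ((ι → Bool) × ι) ≤ #(successes f g)) :
    Fintype.card ι * (log 2 - binEntropy p) ≤ log (Fintype.card S) := by
  rcases hp1.eq_or_lt with rfl | hp1
  · have hall : successes f g = univ := by
      refine eq_univ_of_card _ ((card_le_univ _).antisymm ?_)
      exact_mod_cast (one_mul _).symm.trans_le hsucc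
    have hcard : (2 : ℝ) ^ Fintype.card ι ≤ Fintype.card S := by
      have := Fintype.card_le_of_injective f (injective_of_successes_eq_univ f g hall)
      simp only [Fintype.card_fun, Fintype.card_bool] at this
      exact_mod_cast this
    calc _ = log (2 ^ Fintype.card ι) := by simp [log_pow]
      _ ≤ _ := log_le_log (by positivity) hcard
  · have hp0 : 0 < p := by linarith
    have hq0 : 0 < 1 - p := by linarith
    set t : (ι → Bool) → ℝ := fun x => ∑ i, if g (f x, i) = x i then log p else log (1 - p)
    have hweight : ∑ x, exp (t x) ≤ Fintype.card S := by
      have := sum_prod_ite_le_card_mul_add_pow f g hp0.le hq0.le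
      simpa [t, exp_sum, apply_ite exp, exp_log hp0, exp_log hq0] using this
    have hmean : -(Fintype.card ι * binEntropy p) ≤ (∑ x, t x) / Fintype.card (ι → Bool) := by
      have hlog : log (1 - p) ≤ log p := log_le_log hq0 (by linarith)
      rw [sum_sum_ite_eq_card_successes, le_div_iff₀ (by positivity)]
      simp only [binEntropy, log_inv, Fintype.card_prod] at hsucc ⊢
      push_cast at hsucc ⊢
      nlinarith [mul_nonneg (sub_nonneg.2 hsucc) (sub_nonneg.2 hlog)]
    have hbound : (2 : ℝ) ^ Fintype.card ι * exp (-(Fintype.card ι * binEntropy p))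
        ≤ Fintype.card S := by
      calc _ ≤ Fintype.card (ι → Bool) * exp ((∑ x, t x) / Fintype.card (ι → Bool)) := by
            simp only [Fintype.card_fun, Fintype.card_bool, Nat.cast_pow, Nat.cast_ofNat] at hmean ⊢
            gcongr
        _ ≤ ∑ x, exp (t x) := card_mul_exp_sum_div_card_le_sum_exp t
        _ ≤ _ := hweight
    calc _ = log ((2 : ℝ) ^ Fintype.card ι * exp (-(Fintype.card ι * binEntropy p))) := by
          rw [log_mul (by positivity) (exp_pos _).ne', log_exp, log_pow]; ring
      _ ≤ _ := log_le_log (by positivity) hbound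

end Indexing

theorem stmt_11_general (n : ℕ) (S : Type*) [Fintype S]
    (f : (Fin n → Bool) → S) (g : S × Fin n → Bool)
    (ε : ℝ) (hε : ε ∈ Set.Ioc (0 : ℝ) (1 / 2))
    (hsucc : (1 / 2 + ε) * ((2 ^ n * n : ℕ) : ℝ) ≤
      ((Finset.univ.filter
        (fun p : (Fin n → Bool) × Fin n => g (f p.1, p.2) = p.1 p.2)).card : ℝ)) :
    (n : ℝ) * (1 - (-((1 / 2 + ε) * Real.logb 2 (1 / 2 + ε)) -
        (1 - (1 / 2 + ε)) * Real.logb 2 (1 - (1 / 2 + ε))))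
      ≤ Real.logb 2 (Fintype.card S) := by
  obtain ⟨hε0, hε1⟩ := hε
  have hcard : Fintype.card ((Fin n → Bool) × Fin n) = 2 ^ n * n := by simp
  have key := Indexing.card_mul_log_two_sub_binEntropy_le_log_card f g (p := 1 / 2 + ε)
    (by linarith) (by linarith) (hcard ▸ hsucc)
  rw [Fintype.card_fin] at key
  calc _ = n * (log 2 - binEntropy (1 / 2 + ε)) / log 2 := by
        simp only [binEntropy, log_inv, logb]
        field_simp
        ring
    _ ≤ _ := div_le_div_of_nonneg_right key (log_nonneg one_le_two)

/-- Indexing lower bound. Let `f : {0,1}^n → S` (Alice's message) and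
`g : S × [n] → {0,1}` (Bob's answer), and suppose that for uniform independent
`x ∈ {0,1}^n` and `i ∈ [n]` one has `Pr[g (f x, i) = x i] ≥ 1/2 + ε` with
`ε ∈ (0, 1/2]`. Then `log₂ |S| ≥ n (1 - h(1/2 + ε))`, where
`h p = -p log₂ p - (1-p) log₂ (1-p)` is the binary entropy function. -/
theorem stmt_11 (n : ℕ) (hn : 1 ≤ n) (S : Type*) [Fintype S] [Nonempty S]
    (f : (Fin n → Bool) → S) (g : S × Fin n → Bool)
    (ε : ℝ) (hε : ε ∈ Set.Ioc (0 : ℝ) (1 / 2))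
    (hsucc : (1 / 2 + ε) * ((2 ^ n * n : ℕ) : ℝ) ≤
      ((Finset.univ.filter
        (fun p : (Fin n → Bool) × Fin n => g (f p.1, p.2) = p.1 p.2)).card : ℝ)) :
    (n : ℝ) * (1 - (-((1 / 2 + ε) * Real.logb 2 (1 / 2 + ε)) -
        (1 - (1 / 2 + ε)) * Real.logb 2 (1 - (1 / 2 + ε))))
      ≤ Real.logb 2 (Fintype.card S) :=
  stmt_11_general n S f g ε hε hsucc
end
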